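/- Let d be a positive integer and ε > 0. For every W ∈ ℝ^d there exists Δ ∈ {1,…,d+1} such that for every j ∈ {1,…,d} there is an integer m with [W_j + (2Δ−1)ε, W_j + (2Δ+1)ε] ⊆ [2ε(d+1)·m, 2ε(d+1)·(m+1)). -/
import Mathlib


/-- for every `W ∈ ℝ^d` there exists a shift `Δ ∈ {1,…,d+1}` such that
for every coordinate `j`, the interval `[W_j + (2Δ−1)ε, W_j + (2Δ+1)ε]` is entirely
contained in one of the half-open intervals `[2ε(d+1)·m, 2ε(d+1)·(m+1))`, `m ∈ ℤ`. -/
theorem shift_exists (d : ℕ) (hd : 0 < d) (ε : ℝ) (hε : 0 < ε) (W : Fin d → ℝ) :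
    ∃ Δ : ℕ, 1 ≤ Δ ∧ Δ ≤ d + 1 ∧ ∀ j : Fin d, ∃ m : ℤ,
      2 * ε * ((d : ℝ) + 1) * m ≤ W j + (2 * (Δ : ℝ) - 1) * ε ∧
      W j + (2 * (Δ : ℝ) + 1) * ε < 2 * ε * ((d : ℝ) + 1) * (m + 1) := by
  classical
  set L : ℝ := 2 * ε * ((d : ℝ) + 1) with hLdef
  have hLpos : 0 < L := by positivity
  -- `Bad j Δ` : some multiple of `L` lands in the half-open interval
  -- `(W j + (2Δ-1)ε, W j + (2Δ+1)ε]`, i.e. the shifted interval crosses a boundary.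
  set Bad : Fin d → ℕ → Prop := fun j Δ => ∃ k : ℤ,
      W j + (2 * (Δ : ℝ) - 1) * ε < L * k ∧ L * k ≤ W j + (2 * (Δ : ℝ) + 1) * ε
    with hBaddef
  -- Core estimate: two distinct shifts in `[1, d+1]` cannot both be bad for the same `j`.
  have key : ∀ j : Fin d, ∀ Δ Δ' : ℕ, 1 ≤ Δ' → Δ' < Δ → Δ ≤ d + 1 →
      Bad j Δ → Bad j Δ' → False := by
    intro j Δ Δ' h1 hlt hle ⟨k, hk1, hk2⟩ ⟨k', hk1', hk2'⟩
    have hΔr : (Δ' : ℝ) + 1 ≤ (Δ : ℝ) := by exact_mod_cast hlt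
    have hΔd : (Δ : ℝ) - (Δ' : ℝ) ≤ (d : ℝ) := by
      have h1r : (1 : ℝ) ≤ (Δ' : ℝ) := by exact_mod_cast h1
      have h2r : (Δ : ℝ) ≤ (d : ℝ) + 1 := by exact_mod_cast hle
      linarith
    -- L*(k - k') > 2(Δ-Δ'-1)ε ≥ 0
    have hpos : (0 : ℝ) < L * k - L * k' := by nlinarith
    have hklt : k' < k := by
      by_contra h
      push_neg at h
      have : (k : ℝ) ≤ (k' : ℝ) := by exact_mod_cast h
      nlinarith
    have hk1le : (1 : ℝ) ≤ (k : ℝ) - (k' : ℝ) := by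
      have : (k' : ℤ) + 1 ≤ k := hklt
      have h2 : ((k' : ℝ) + 1) ≤ (k : ℝ) := by exact_mod_cast this
      linarith
    -- but L*(k - k') < 2(Δ-Δ'+1)ε ≤ 2(d+1)ε = L
    nlinarith [mul_le_mul_of_nonneg_left hk1le (le_of_lt hLpos)]
  -- the (unique) bad shift for coordinate `j`, if any
  set g : Fin d → ℕ := fun j =>
    if h : ∃ Δ ∈ Finset.Icc 1 (d + 1), Bad j Δ then h.choose else 0 with hgdef
  -- pigeonhole: some `Δ ∈ [1, d+1]` avoids all values `g j`
  have hcard : (Finset.univ.image g).card < (Finset.Icc 1 (d + 1)).card := by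
    calc (Finset.univ.image g).card ≤ d := by
          simpa using (Finset.card_image_le (s := (Finset.univ : Finset (Fin d))) (f := g))
      _ < d + 1 := Nat.lt_succ_self d
      _ = (Finset.Icc 1 (d + 1)).card := by simp [Nat.card_Icc]
  have hex : ∃ Δ ∈ Finset.Icc 1 (d + 1), Δ ∉ Finset.univ.image g := by
    by_contra h
    push_neg at h
    exact absurd (Finset.card_le_card h) (not_le.mpr hcard)
  obtain ⟨Δ, hΔmem, hΔnot⟩ := hex
  obtain ⟨hΔ1, hΔ2⟩ := Finset.mem_Icc.mp hΔmem
  refine ⟨Δ, hΔ1, hΔ2, fun j => ?_⟩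
  -- the natural candidate cell
  set x : ℝ := W j + (2 * (Δ : ℝ) - 1) * ε with hxdef
  refine ⟨⌊x / L⌋, ?_, ?_⟩
  · calc L * ⌊x / L⌋ ≤ L * (x / L) := by
          exact mul_le_mul_of_nonneg_left (Int.floor_le _) (le_of_lt hLpos)
      _ = x := by field_simp
  · by_contra h
    push_neg at h
    -- then `Δ` is bad for `j`, contradicting the choice of `Δ`
    have hbad : Bad j Δ := by
      refine ⟨⌊x / L⌋ + 1, ?_, ?_⟩
      · have := Int.lt_floor_add_one (x / L)
        have h2 : x < L * (⌊x / L⌋ + 1) := by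
          have := mul_lt_mul_of_pos_left this hLpos
          calc x = L * (x / L) := by field_simp
            _ < L * (⌊x / L⌋ + 1) := by linarith
        push_cast
        push_cast at h2
        linarith [h2]
      · push_cast

        linarith [h]
    have hexj : ∃ Δ' ∈ Finset.Icc 1 (d + 1), Bad j Δ' := ⟨Δ, hΔmem, hbad⟩
    have hg : g j = hexj.choose := dif_pos hexj
    obtain ⟨hmem', hbad'⟩ := hexj.choose_spec
    obtain ⟨h1', h2'⟩ := Finset.mem_Icc.mp hmem'
    have heq : Δ = hexj.choose := by
      rcases lt_trichotomy Δ hexj.choose with hlt | heq | hgt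
      · exact (key j hexj.choose Δ hΔ1 hlt h2' hbad' hbad).elim
      · exact heq
      · exact (key j Δ hexj.choose h1' hgt hΔ2 hbad hbad').elim
    exact hΔnot (Finset.mem_image.mpr ⟨j, Finset.mem_univ j, by rw [hg, heq]⟩)
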